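/- For constant pairwise commuting M_α and constant N_α, the inclusion Im 𝒞(t₀, t) ⊆ Im G, equivalently Ker(Gᵀ) ⊆ Ker(𝒞(t₀, t)ᵀ), holds for all t₀, t ∈ ℝᵐ (without any ordering assumption on t₀, t); hence rank 𝒞(t₀, t) ≤ rank G for all t₀, t. -/

import Mathlib

open Matrix MeasureTheory

noncomputable section

/-- The segment from `t₀` to `t`, parametrized on `[0,1]`. -/
def seg {m : ℕ} (t₀ t : Fin m → ℝ) (τ : ℝ) : Fin m → ℝ := t₀ + τ • (t - t₀)

/-- `e^{−M_β(s^β − t₀^β)}`, the fundamental matrix factor of the autonomous system. -/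
def expNeg {m n : ℕ} (M : Fin m → Matrix (Fin n) (Fin n) ℝ) (t₀ s : Fin m → ℝ) :
    Matrix (Fin n) (Fin n) ℝ :=
  NormedSpace.exp (-(∑ β, (s β - t₀ β) • M β))

/-- The controllability gramian
`𝒞(t₀,t) = ∫_{γ_{t₀,t}} e^{−M_β(s^β−t₀^β)} N_α N_αᵀ (e^{−M_β(s^β−t₀^β)})ᵀ ds^α` of the
autonomous system, computed along the segment from `t₀` to `t`. -/
def ctrlGramianConst {m n k : ℕ} (M : Fin m → Matrix (Fin n) (Fin n) ℝ)
    (N : Fin m → Matrix (Fin n) (Fin k) ℝ) (t₀ t : Fin m → ℝ) :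
    Matrix (Fin n) (Fin n) ℝ :=
  fun i j => ∫ τ in (0:ℝ)..1, ∑ α, (t α - t₀ α) *
    (expNeg M t₀ (seg t₀ t τ) * (N α * (N α)ᵀ) * (expNeg M t₀ (seg t₀ t τ))ᵀ) i j

/-- The image of the controllability matrix `G`: the span of the columns of all the
blocks `M₁^{k₁} M₂^{k₂} ⋯ M_m^{k_m} N_α` with `0 ≤ k₁, …, k_m ≤ n−1`. -/
def imageCtrlMatrix {m n k : ℕ} (M : Fin m → Matrix (Fin n) (Fin n) ℝ)
    (N : Fin m → Matrix (Fin n) (Fin k) ℝ) : Submodule ℝ (Fin n → ℝ) :=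
  Submodule.span ℝ { w | ∃ κ : Fin m → ℕ, (∀ i, κ i ≤ n - 1) ∧
    ∃ (α : Fin m) (j : Fin k),
      w = (List.ofFn fun i => M i ^ κ i).prod *ᵥ (fun r => N α r j) }

/-!
`Im G` is invariant under every `M_i`: by Cayley–Hamilton `M_i^n` is a combination of
`1, M_i, …, M_i^{n-1}`, and since the `M_β` commute, `M_i` can be moved onto its own factor in
each block `M₁^{k₁}⋯M_m^{k_m}`. The matrices leaving the closed subspace `Im G` invariant form a
closed subalgebra, so it also contains `e^{−M_β(s^β−t₀^β)}`. As `Im G` contains the columns of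
every `N_α`, each value of the gramian's integrand maps into `Im G`, and so does its integral.
-/

open Polynomial in
theorem Matrix.pow_mem_span_pow_lt {ι R : Type*} [Fintype ι] [DecidableEq ι] [CommRing R]
    [Nontrivial R] (A : Matrix ι ι R) (p : ℕ) :
    A ^ p ∈ Submodule.span R ((A ^ ·) '' Set.Iio (Fintype.card ι)) := by
  classical
  have hlt : X ^ p %ₘ A.charpoly ∈ degreeLT R (Fintype.card ι) := by
    rw [mem_degreeLT, ← A.charpoly_degree_eq_dim]
    exact degree_modByMonic_lt _ A.charpoly_monic
  have hmap := Submodule.mem_map_of_mem (f := (aeval A).toLinearMap) hlt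
  rw [degreeLT_eq_span_X_pow, Submodule.map_span, Finset.coe_image, Set.image_image,
    Finset.coe_range, AlgHom.toLinearMap_apply, ← pow_eq_aeval_mod_charpoly] at hmap
  simpa using hmap

theorem List.prod_ofFn_pow_add_single {M : Type*} [Monoid M] {m : ℕ} (f : Fin m → M)
    (hf : ∀ a b, Commute (f a) (f b)) (κ : Fin m → ℕ) (i : Fin m) (a : ℕ) :
    (List.ofFn fun r => f r ^ (κ + Pi.single i a : Fin m → ℕ) r).prod
      = f i ^ a * (List.ofFn fun r => f r ^ κ r).prod := by
  induction m with
  | zero => exact i.elim0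
  | succ m ih =>
    simp only [List.ofFn_succ, List.prod_cons]
    cases i using Fin.cases with
    | zero => simp [pow_add, mul_assoc, (Commute.pow_pow_self (f 0) (κ 0) a).eq]
    | succ j =>
      have hzero : (Pi.single j.succ a : Fin (m + 1) → ℕ) 0 = 0 :=
        Pi.single_eq_of_ne (Fin.succ_ne_zero j).symm a
      have hsucc (r : Fin m) :
          (Pi.single j.succ a : Fin (m + 1) → ℕ) r.succ = (Pi.single j a : Fin m → ℕ) r := by
        simp [Pi.single_apply]
      have htail := ih (fun r => f r.succ) (fun a b => hf _ _) (fun r => κ r.succ) j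
      simp only [Pi.add_apply] at htail ⊢
      simp only [hzero, hsucc, add_zero]
      rw [htail, ← mul_assoc, ← mul_assoc, ((hf 0 j.succ).pow_pow _ _).eq]

def Matrix.invtSubalgebra {ι R : Type*} [Fintype ι] [DecidableEq ι] [CommRing R]
    (V : Submodule R (ι → R)) : Subalgebra R (Matrix ι ι R) where
  carrier := {A | ∀ w ∈ V, A *ᵥ w ∈ V}
  mul_mem' {A B} hA hB w hw := by rw [← mulVec_mulVec]; exact hA _ (hB w hw)
  add_mem' {A B} hA hB w hw := by rw [add_mulVec]; exact add_mem (hA w hw) (hB w hw)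
  algebraMap_mem' c w hw := by
    rw [Algebra.algebraMap_eq_smul_one, smul_mulVec, one_mulVec]; exact V.smul_mem c hw

theorem Matrix.mem_invtSubalgebra {ι R : Type*} [Fintype ι] [DecidableEq ι] [CommRing R]
    {V : Submodule R (ι → R)} {A : Matrix ι ι R} :
    A ∈ invtSubalgebra V ↔ ∀ w ∈ V, A *ᵥ w ∈ V := Iff.rfl

theorem Matrix.isClosed_invtSubalgebra {𝕜 ι : Type*} [NontriviallyNormedField 𝕜]
    [CompleteSpace 𝕜] [Fintype ι] [DecidableEq ι] (V : Submodule 𝕜 (ι → 𝕜)) :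
    IsClosed (invtSubalgebra V : Set (Matrix ι ι 𝕜)) := by
  have hinter : (invtSubalgebra V : Set (Matrix ι ι 𝕜)) = ⋂ w ∈ V, (· *ᵥ w) ⁻¹' V := by
    ext A; simp [mem_invtSubalgebra]
  rw [hinter]
  exact isClosed_biInter fun w _ =>
    V.closed_of_finiteDimensional.preimage (continuous_id.matrix_mulVec continuous_const)

theorem Submodule.intervalIntegral_mem {E : Type*} [NormedAddCommGroup E] [NormedSpace ℝ E]
    [CompleteSpace E] (V : Submodule ℝ E) [CompleteSpace V] {f : ℝ → E} (hf : Continuous f)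
    (hfV : ∀ x, f x ∈ V) (a b : ℝ) : ∫ x in a..b, f x ∈ V := by
  let g : ℝ → V := fun x => ⟨f x, hfV x⟩
  have hg : Continuous g := hf.subtype_mk hfV
  rw [show f = fun x => V.subtypeL (g x) from rfl,
    V.subtypeL.intervalIntegral_comp_comm (hg.intervalIntegrable a b)]
  exact (∫ x in a..b, g x).2

theorem Matrix.intervalIntegral_entries_mulVec {ι κ : Type*} [Fintype ι] [Fintype κ]
    {F : ℝ → Matrix ι κ ℝ} (hF : Continuous F) (a b : ℝ) (v : κ → ℝ) :
    (of fun i j => ∫ τ in a..b, F τ i j) *ᵥ v = ∫ τ in a..b, F τ *ᵥ v := by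
  have hentry (i : ι) (j : κ) : Continuous fun τ => F τ i j :=
    (continuous_apply j).comp ((continuous_apply i).comp hF)
  ext i
  have hproj :=
    (ContinuousLinearMap.proj (R := ℝ) (φ := fun _ : ι => ℝ) i).intervalIntegral_comp_comm
      ((hF.matrix_mulVec (continuous_const (y := v))).intervalIntegrable (μ := volume) a b)
  simp only [ContinuousLinearMap.proj_apply] at hproj
  rw [← hproj]
  simp only [mulVec, dotProduct, of_apply]
  rw [intervalIntegral.integral_finsetSum fun j _ =>
    ((hentry i j).fun_mul (continuous_const (y := v j))).intervalIntegrable a b]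
  simp_rw [intervalIntegral.integral_mul_const]

@[fun_prop]
theorem continuous_seg {m : ℕ} (t₀ t : Fin m → ℝ) : Continuous (seg t₀ t) := by
  unfold seg; fun_prop

theorem continuous_expNeg {m n : ℕ} (M : Fin m → Matrix (Fin n) (Fin n) ℝ) (t₀ : Fin m → ℝ) :
    Continuous (expNeg M t₀) := by
  let := Matrix.linftyOpNormedRing (n := Fin n) (α := ℝ)
  let := Matrix.linftyOpNormedAlgebra (n := Fin n) (R := ℝ) (α := ℝ)
  have hexp : Continuous (NormedSpace.exp : Matrix (Fin n) (Fin n) ℝ → _) :=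
    continuous_iff_continuousAt.2 fun A => (NormedSpace.exp_analytic (𝕂 := ℝ) A).continuousAt
  exact hexp.comp (by fun_prop)

def ctrlIntegrand {m n k : ℕ} (M : Fin m → Matrix (Fin n) (Fin n) ℝ)
    (N : Fin m → Matrix (Fin n) (Fin k) ℝ) (t₀ s : Fin m → ℝ) (α : Fin m) :
    Matrix (Fin n) (Fin n) ℝ :=
  expNeg M t₀ s * (N α * (N α)ᵀ) * (expNeg M t₀ s)ᵀ

section ControlSystem

variable {m n k : ℕ} (M : Fin m → Matrix (Fin n) (Fin n) ℝ)
  (N : Fin m → Matrix (Fin n) (Fin k) ℝ)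

theorem prod_mulVec_mem_imageCtrlMatrix {κ : Fin m → ℕ} (hκ : ∀ r, κ r ≤ n - 1) (α : Fin m)
    (j : Fin k) :
    (List.ofFn fun r => M r ^ κ r).prod *ᵥ (fun r => N α r j) ∈ imageCtrlMatrix M N :=
  Submodule.subset_span ⟨κ, hκ, α, j, rfl⟩

theorem mulVec_mem_imageCtrlMatrix (α : Fin m) (u : Fin k → ℝ) :
    N α *ᵥ u ∈ imageCtrlMatrix M N := by
  have hu : N α *ᵥ u ∈ LinearMap.range (N α).mulVecLin := ⟨u, rfl⟩
  rw [range_mulVecLin] at hu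
  refine Submodule.span_le.2 ?_ hu
  rintro _ ⟨j, rfl⟩
  have h := prod_mulVec_mem_imageCtrlMatrix M N (κ := 0) (by simp) α j
  simp only [Pi.zero_apply, pow_zero, List.ofFn_const, List.prod_replicate, one_pow,
    one_mulVec] at h
  exact h

@[fun_prop]
theorem continuous_ctrlIntegrand (t₀ : Fin m → ℝ) (α : Fin m) :
    Continuous fun s => ctrlIntegrand M N t₀ s α :=
  ((continuous_expNeg M t₀).matrix_mul continuous_const).matrix_mul
    (continuous_expNeg M t₀).matrix_transpose

theorem ctrlGramianConst_mulVec (t₀ t : Fin m → ℝ) (v : Fin n → ℝ) :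
    ctrlGramianConst M N t₀ t *ᵥ v
      = ∫ τ in (0 : ℝ)..1, ∑ α, (t α - t₀ α) • (ctrlIntegrand M N t₀ (seg t₀ t τ) α *ᵥ v) := by
  let F τ := ∑ α, (t α - t₀ α) • ctrlIntegrand M N t₀ (seg t₀ t τ) α
  have hF : Continuous F := by fun_prop
  have hG : ctrlGramianConst M N t₀ t = of fun i j => ∫ τ in (0 : ℝ)..1, F τ i j := by
    ext i j
    simp [F, ctrlGramianConst, ctrlIntegrand, Matrix.sum_apply]
  rw [hG, intervalIntegral_entries_mulVec hF]
  simp [F, sum_mulVec, smul_mulVec]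

variable {M} (hM : ∀ α β, M α * M β = M β * M α)
include hM

theorem pow_mul_prod_mulVec_mem_imageCtrlMatrix {κ : Fin m → ℕ} (hκ : ∀ r, κ r ≤ n - 1)
    {i : Fin m} (hi : κ i = 0) (p : ℕ) (α : Fin m) (j : Fin k) :
    (M i ^ p * (List.ofFn fun r => M r ^ κ r).prod) *ᵥ (fun r => N α r j)
      ∈ imageCtrlMatrix M N := by
  have hp := (M i).pow_mem_span_pow_lt p
  rw [Fintype.card_fin] at hp
  generalize M i ^ p = A at hp ⊢
  induction hp using Submodule.span_induction with
  | mem _ hA =>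
    obtain ⟨q, hq, rfl⟩ := hA
    rw [← List.prod_ofFn_pow_add_single M hM]
    refine prod_mulVec_mem_imageCtrlMatrix M N (fun r => ?_) α j
    rcases eq_or_ne r i with rfl | hr
    · simp only [Pi.add_apply, hi, Pi.single_eq_same, zero_add]
      exact Nat.le_sub_one_of_lt hq
    · simpa [Pi.single_eq_of_ne hr] using hκ r
  | zero => simp
  | add A B _ _ hA hB => rw [add_mul, add_mulVec]; exact add_mem hA hB
  | smul c A _ hA => rw [smul_mul_assoc, smul_mulVec]; exact Submodule.smul_mem _ c hA

theorem mem_invtSubalgebra_imageCtrlMatrix (i : Fin m) :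
    M i ∈ invtSubalgebra (imageCtrlMatrix M N) := by
  change imageCtrlMatrix M N ≤ (imageCtrlMatrix M N).comap (M i).mulVecLin
  refine Submodule.span_le.2 ?_
  rintro _ ⟨κ, hκ, α, j, rfl⟩
  have hsplit : κ = Function.update κ i 0 + Pi.single i (κ i) := by
    ext r
    rcases eq_or_ne r i with rfl | hr <;> simp [Function.update_of_ne, Pi.single_eq_of_ne, *]
  simp only [SetLike.mem_coe, Submodule.mem_comap, mulVecLin_apply, mulVec_mulVec]
  rw [hsplit, List.prod_ofFn_pow_add_single M hM, ← mul_assoc, ← pow_succ']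
  refine pow_mul_prod_mulVec_mem_imageCtrlMatrix N hM (fun r => ?_) (by simp) _ α j
  rcases eq_or_ne r i with rfl | hr
  · simp
  · simpa [Function.update_of_ne hr] using hκ r

theorem expNeg_mem_invtSubalgebra_imageCtrlMatrix (t₀ s : Fin m → ℝ) :
    expNeg M t₀ s ∈ invtSubalgebra (imageCtrlMatrix M N) :=
  NormedSpace.exp_mem (isClosed_invtSubalgebra _) <| neg_mem <| sum_mem fun β _ =>
    Subalgebra.smul_mem _ (mem_invtSubalgebra_imageCtrlMatrix N hM β) _

theorem ctrlIntegrand_mulVec_mem_imageCtrlMatrix (t₀ s : Fin m → ℝ) (α : Fin m)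
    (v : Fin n → ℝ) : ctrlIntegrand M N t₀ s α *ᵥ v ∈ imageCtrlMatrix M N := by
  rw [ctrlIntegrand, ← mulVec_mulVec, ← mulVec_mulVec, ← mulVec_mulVec]
  exact expNeg_mem_invtSubalgebra_imageCtrlMatrix N hM t₀ s _ (mulVec_mem_imageCtrlMatrix M N α _)

end ControlSystem

/-- For pairwise commuting constant `M_α` and constant `N_α`, the inclusion
`Im 𝒞(t₀,t) ⊆ Im G` holds for all `t₀, t` (no ordering assumption); in particular
`rank 𝒞(t₀,t) ≤ rank G`. -/
theorem gramian_image_subset_ctrlMatrix_image {m n k : ℕ}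
    (M : Fin m → Matrix (Fin n) (Fin n) ℝ)
    (hM : ∀ α β, M α * M β = M β * M α)
    (N : Fin m → Matrix (Fin n) (Fin k) ℝ) :
    ∀ t₀ t : Fin m → ℝ,
      LinearMap.range (ctrlGramianConst M N t₀ t).mulVecLin ≤ imageCtrlMatrix M N ∧
      (ctrlGramianConst M N t₀ t).rank ≤ Module.finrank ℝ (imageCtrlMatrix M N) := by
  intro t₀ t
  have hrange : LinearMap.range (ctrlGramianConst M N t₀ t).mulVecLin ≤ imageCtrlMatrix M N := by
    rintro _ ⟨v, rfl⟩
    rw [mulVecLin_apply, ctrlGramianConst_mulVec]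
    refine (imageCtrlMatrix M N).intervalIntegral_mem (by fun_prop) (fun τ => sum_mem fun α _ =>
      Submodule.smul_mem _ _ (ctrlIntegrand_mulVec_mem_imageCtrlMatrix N hM _ _ α v)) 0 1
  exact ⟨hrange, Submodule.finrank_mono hrange⟩
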